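/- Let d ≥ 1 and let M be a positive definite symmetric d×d real matrix, and define for t > 0 and x ∈ ℝ^d, p_t(x) := (2πt)^{−d/2} (det M)^{−1/2} exp(−x·M^{−1}x/(2t)). For every ε > 0 there exists a constant c_ε such that for all r₁, r₂, r₃ > 0 and all u, v ∈ ℝ^d: ∫_{{z∈ℝ^d : |z| > ε}} dz p_{r₁}(z) p_{r₂}(u−z) p_{r₃}(v−z) ≤ c_ε (r₂+r₃)^{−d/2}. -/

import Mathlib

/-!
Away from the origin, `p_{r₁}(z)` is bounded uniformly in `r₁`, because `y ↦ y^{d/2} e^{-c y}` is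
bounded on `[0, ∞)`. By symmetry let `r₃ ≤ r₂`, so that `2 r₂ ≥ r₂ + r₃`: then `p_{r₂}(u - z)` is at
most its supremum, a multiple of `r₂^{-d/2} ≤ const · (r₂ + r₃)^{-d/2}`, while `p_{r₃}(v - z)` is
dominated, via `x ⬝ M⁻¹ x ≥ a |x|²`, by a Gaussian in `z` whose integral `a^{-d/2}` does not depend
on `r₃`.
-/

open scoped BigOperators
open Filter MeasureTheory

/-- Euclidean norm on ℝ^d. -/
noncomputable def rnorm {d : ℕ} (x : Fin d → ℝ) : ℝ := Real.sqrt (∑ i, (x i) ^ 2)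

/-- Gaussian density `p_t(x)` with covariance matrix `M`. -/
noncomputable def gaussDensity (d : ℕ) (M : Matrix (Fin d) (Fin d) ℝ) (t : ℝ)
    (x : Fin d → ℝ) : ℝ :=
  Real.rpow (2 * Real.pi * t) (-(d : ℝ) / 2) * Real.rpow M.det (-(1 : ℝ) / 2) *
    Real.exp (- dotProduct x (M⁻¹.mulVec x) / (2 * t))

open Real Finset Matrix

theorem Matrix.PosDef.exists_pos_mul_sum_sq_le_dotProduct_mulVec {n : Type*} [Fintype n]
    {N : Matrix n n ℝ} (hN : N.PosDef) :
    ∃ a, 0 < a ∧ ∀ x : n → ℝ, a * ∑ i, x i ^ 2 ≤ x ⬝ᵥ N *ᵥ x := by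
  rcases isEmpty_or_nonempty n with _ | _
  · exact ⟨1, one_pos, fun x => by simp⟩
  set q : EuclideanSpace ℝ n → ℝ := fun y => y.ofLp ⬝ᵥ N *ᵥ y.ofLp
  have hq : Continuous q := by fun_prop
  obtain ⟨y₀, hy₀, hmin⟩ := (isCompact_sphere (0 : EuclideanSpace ℝ n) 1).exists_isMinOn
    (NormedSpace.sphere_nonempty.mpr zero_le_one) hq.continuousOn
  have hy₀_ne : y₀.ofLp ≠ 0 := by
    intro h
    rw [mem_sphere_zero_iff_norm, ← WithLp.toLp_ofLp 2 y₀, h] at hy₀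
    simp at hy₀
  refine ⟨q y₀, hN.dotProduct_mulVec_pos hy₀_ne, fun x => ?_⟩
  rcases eq_or_ne x 0 with rfl | hx
  · simp
  set y := WithLp.toLp 2 x
  have hy : y ≠ 0 := by simpa [y] using hx
  have hnorm : ∑ i, x i ^ 2 = ‖y‖ ^ 2 := by
    simp [y, EuclideanSpace.norm_sq_eq]
  have hmem : (‖y‖⁻¹ • y) ∈ Metric.sphere (0 : EuclideanSpace ℝ n) 1 := by
    simpa using norm_smul_inv_norm (𝕜 := ℝ) hy
  have hscale : q (‖y‖⁻¹ • y) = (‖y‖ ^ 2)⁻¹ * (x ⬝ᵥ N *ᵥ x) := by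
    simp [q, y, Matrix.mulVec_smul]
    ring
  have hle := isMinOn_iff.mp hmin _ hmem
  rwa [hscale, le_inv_mul_iff₀ (by positivity), mul_comm, ← hnorm] at hle

theorem Real.rpow_mul_exp_neg_mul_le {s b x : ℝ} (hs : 0 ≤ s) (hb : 0 < b) (hx : 0 ≤ x) :
    x ^ s * exp (-(b * x)) ≤ ((s + 1) / b) ^ s := by
  set y := b * x / (s + 1)
  have hy : 0 ≤ y := by positivity
  have hxy : x = (s + 1) / b * y := by simp only [y]; field_simp
  have hys : y * s ≤ b * x := by
    rw [div_mul_eq_mul_div, div_le_iff₀ (by positivity)]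
    nlinarith [mul_nonneg hb.le hx]
  calc x ^ s * exp (-(b * x)) = ((s + 1) / b) ^ s * (y ^ s * exp (-(b * x))) := by
        nth_rewrite 1 [hxy]
        rw [mul_rpow (by positivity) hy, mul_assoc]
    _ ≤ ((s + 1) / b) ^ s * (exp y ^ s * exp (-(b * x))) := by
        gcongr
        linarith [add_one_le_exp y]
    _ ≤ ((s + 1) / b) ^ s := by
        rw [← exp_mul, ← exp_add]
        exact mul_le_of_le_one_right (by positivity) (exp_le_one_iff.mpr (by linarith))

theorem integrable_exp_neg_mul_sum_sq {ι : Type*} [Fintype ι] {b : ℝ} (hb : 0 < b) :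
    Integrable fun x : ι → ℝ => exp (-b * ∑ i, x i ^ 2) := by
  simp_rw [mul_sum, exp_sum]
  exact Integrable.fintype_prod (f := fun _ y => exp (-b * y ^ 2))
    fun _ => integrable_exp_neg_mul_sq hb

theorem integral_exp_neg_mul_sum_sq {ι : Type*} [Fintype ι] {b : ℝ} (hb : 0 < b) :
    ∫ x : ι → ℝ, exp (-b * ∑ i, x i ^ 2) = (π / b) ^ ((Fintype.card ι : ℝ) / 2) := by
  simp_rw [mul_sum, exp_sum]
  rw [integral_fintype_prod_volume_eq_prod (f := fun _ y => exp (-b * y ^ 2)), prod_const,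
    integral_gaussian, card_univ, sqrt_eq_rpow, ← rpow_natCast,
    ← rpow_mul (div_pos pi_pos hb).le]
  ring_nf

theorem integral_rpow_mul_exp_neg_mul_sum_sub_sq {d : ℕ} {a t : ℝ} (ha : 0 < a) (ht : 0 < t)
    (v : Fin d → ℝ) :
    ∫ z : Fin d → ℝ,
        (2 * π * t) ^ (-(d : ℝ) / 2) * exp (-(a / (2 * t)) * ∑ i, (v i - z i) ^ 2)
      = a ^ (-(d : ℝ) / 2) := by
  have htranslate := integral_sub_left_eq_self
    (fun z : Fin d → ℝ => exp (-(a / (2 * t)) * ∑ i, z i ^ 2)) volume v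
  simp only [Pi.sub_apply] at htranslate
  rw [integral_const_mul, htranslate, integral_exp_neg_mul_sum_sq (by positivity),
    Fintype.card_fin, show π / (a / (2 * t)) = 2 * π * t / a by field_simp,
    div_rpow (by positivity) ha.le, neg_div, rpow_neg (by positivity), rpow_neg ha.le]
  have hpow : 0 < (2 * π * t) ^ ((d : ℝ) / 2) := by positivity
  field_simp

section GaussDensity

variable {d : ℕ} {M : Matrix (Fin d) (Fin d) ℝ} {t : ℝ}

theorem gaussDensity_nonneg (hM : M.PosSemidef) (ht : 0 ≤ t) (x : Fin d → ℝ) :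
    0 ≤ gaussDensity d M t x := by
  have hdet := hM.det_nonneg
  unfold gaussDensity
  rw [rpow_eq_pow, rpow_eq_pow]
  positivity

theorem gaussDensity_le_mul_exp {a : ℝ} (hM : M.PosSemidef)
    (hq : ∀ x : Fin d → ℝ, a * ∑ i, x i ^ 2 ≤ x ⬝ᵥ M⁻¹ *ᵥ x) (ht : 0 < t) (x : Fin d → ℝ) :
    gaussDensity d M t x ≤
      M.det ^ (-(1 : ℝ) / 2) *
        ((2 * π * t) ^ (-(d : ℝ) / 2) * exp (-(a / (2 * t)) * ∑ i, x i ^ 2)) := by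
  have hdet := hM.det_nonneg
  have hexp : -(a / (2 * t)) * ∑ i, x i ^ 2 ≥ -(x ⬝ᵥ M⁻¹ *ᵥ x) / (2 * t) := by
    rw [neg_div, neg_mul, ge_iff_le, neg_le_neg_iff, div_mul_eq_mul_div,
      div_le_div_iff_of_pos_right (by positivity)]
    exact hq x
  unfold gaussDensity
  rw [rpow_eq_pow, rpow_eq_pow, mul_comm ((2 * π * t) ^ _), mul_assoc]
  gcongr

theorem gaussDensity_le (hM : M.PosSemidef) (ht : 0 < t) (x : Fin d → ℝ) :
    gaussDensity d M t x ≤ M.det ^ (-(1 : ℝ) / 2) * (2 * π * t) ^ (-(d : ℝ) / 2) := by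
  have hdet := hM.det_nonneg
  refine (gaussDensity_le_mul_exp (a := 0) hM (fun x => ?_) ht x).trans ?_
  · simpa using hM.inv.dotProduct_mulVec_nonneg x
  · simp

theorem gaussDensity_le_of_lt_rnorm {a ε : ℝ} (hM : M.PosSemidef) (ha : 0 < a)
    (hq : ∀ x : Fin d → ℝ, a * ∑ i, x i ^ 2 ≤ x ⬝ᵥ M⁻¹ *ᵥ x) (hε : 0 < ε) (ht : 0 < t)
    {x : Fin d → ℝ} (hx : ε < rnorm x) :
    gaussDensity d M t x ≤
      M.det ^ (-(1 : ℝ) / 2) * (((d : ℝ) / 2 + 1) / (π * a * ε ^ 2)) ^ ((d : ℝ) / 2) := by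
  have hdet := hM.det_nonneg
  have hxε : ε ^ 2 ≤ ∑ i, x i ^ 2 := ((lt_sqrt hε.le).mp hx).le
  refine (gaussDensity_le_mul_exp hM hq ht x).trans ?_
  gcongr
  calc (2 * π * t) ^ (-(d : ℝ) / 2) * exp (-(a / (2 * t)) * ∑ i, x i ^ 2)
      ≤ (2 * π * t)⁻¹ ^ ((d : ℝ) / 2) * exp (-(π * a * ε ^ 2 * (2 * π * t)⁻¹)) := by
        rw [neg_div, rpow_neg (by positivity), inv_rpow (by positivity)]
        gcongr
        field_simp
        exact neg_le_neg hxε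
    _ ≤ _ := rpow_mul_exp_neg_mul_le (by positivity) (by positivity) (by positivity)

theorem exists_setIntegral_gaussDensity_mul_le (hM : M.PosDef) {ε : ℝ} (hε : 0 < ε) :
    ∃ C, 0 ≤ C ∧ ∀ r₁ r₂ r₃ : ℝ, 0 < r₁ → 0 < r₂ → 0 < r₃ → ∀ u v : Fin d → ℝ,
      ∫ z in {z : Fin d → ℝ | ε < rnorm z},
          gaussDensity d M r₁ z * gaussDensity d M r₂ (u - z) * gaussDensity d M r₃ (v - z)
        ≤ C * (2 * π * r₂) ^ (-(d : ℝ) / 2) := by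
  obtain ⟨a, ha, hq⟩ := hM.inv.exists_pos_mul_sum_sq_le_dotProduct_mulVec
  have hM' := hM.posSemidef
  have hdet := hM.det_pos
  set S : Set (Fin d → ℝ) := {z | ε < rnorm z}
  set D := M.det ^ (-(1 : ℝ) / 2)
  set K := D * (((d : ℝ) / 2 + 1) / (π * a * ε ^ 2)) ^ ((d : ℝ) / 2)
  refine ⟨K * D * (D * a ^ (-(d : ℝ) / 2)), by positivity, fun r₁ r₂ r₃ h₁ h₂ h₃ u v => ?_⟩
  set G : (Fin d → ℝ) → ℝ := fun z =>
    (2 * π * r₃) ^ (-(d : ℝ) / 2) * exp (-(a / (2 * r₃)) * ∑ i, (v i - z i) ^ 2)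
  have hG : Integrable G :=
    ((integrable_exp_neg_mul_sum_sq (by positivity)).comp_sub_left v).const_mul _
  have hS : MeasurableSet S :=
    measurableSet_lt measurable_const (by unfold rnorm; fun_prop)
  have hbound : ∀ z ∈ S,
      gaussDensity d M r₁ z * gaussDensity d M r₂ (u - z) * gaussDensity d M r₃ (v - z)
        ≤ K * (D * (2 * π * r₂) ^ (-(d : ℝ) / 2)) * (D * G z) := fun z hz =>
    mul_le_mul (mul_le_mul (gaussDensity_le_of_lt_rnorm hM' ha hq hε h₁ hz)
      (gaussDensity_le hM' h₂ _) (gaussDensity_nonneg hM' h₂.le _) (by positivity))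
      (gaussDensity_le_mul_exp hM' hq h₃ _) (gaussDensity_nonneg hM' h₃.le _) (by positivity)
  calc _ ≤ ∫ z in S, K * (D * (2 * π * r₂) ^ (-(d : ℝ) / 2)) * (D * G z) :=
        integral_mono_of_nonneg (ae_of_all _ fun z => mul_nonneg (mul_nonneg
            (gaussDensity_nonneg hM' h₁.le _) (gaussDensity_nonneg hM' h₂.le _))
            (gaussDensity_nonneg hM' h₃.le _))
          ((hG.const_mul _).const_mul _).integrableOn (ae_restrict_of_forall_mem hS hbound)
    _ ≤ ∫ z, K * (D * (2 * π * r₂) ^ (-(d : ℝ) / 2)) * (D * G z) :=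
        setIntegral_le_integral ((hG.const_mul _).const_mul _)
          (ae_of_all _ fun z => by positivity)
    _ = K * D * (D * a ^ (-(d : ℝ) / 2)) * (2 * π * r₂) ^ (-(d : ℝ) / 2) := by
        rw [integral_const_mul, integral_const_mul,
          integral_rpow_mul_exp_neg_mul_sum_sub_sq ha h₃]
        ring

end GaussDensity

theorem rpow_two_pi_mul_le_rpow_add {s t e : ℝ} (ht : 0 < t) (hts : t ≤ s) (he : e ≤ 0) :
    (2 * π * s) ^ e ≤ π ^ e * (s + t) ^ e := by
  rw [← mul_rpow pi_pos.le (by linarith)]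
  exact rpow_le_rpow_of_nonpos (mul_pos pi_pos (by linarith)) (by nlinarith [pi_pos]) he

theorem stmt9_general (d : ℕ)
    (M : Matrix (Fin d) (Fin d) ℝ) (hMpos : M.PosDef) :
    ∀ ε : ℝ, 0 < ε → ∃ c : ℝ, ∀ r₁ r₂ r₃ : ℝ, 0 < r₁ → 0 < r₂ → 0 < r₃ →
      ∀ u v : Fin d → ℝ,
        (∫ z in {z : Fin d → ℝ | ε < rnorm z},
            gaussDensity d M r₁ z * gaussDensity d M r₂ (u - z) *
              gaussDensity d M r₃ (v - z)) ≤
          c * (r₂ + r₃) ^ (-(d : ℝ) / 2) := by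
  intro ε hε
  obtain ⟨C, hC, hbound⟩ := exists_setIntegral_gaussDensity_mul_le hMpos hε
  refine ⟨C * π ^ (-(d : ℝ) / 2), fun r₁ r₂ r₃ h₁ h₂ h₃ u v => ?_⟩
  have he : -(d : ℝ) / 2 ≤ 0 := by rw [neg_div, neg_nonpos]; positivity
  rcases le_total r₃ r₂ with h | h
  · calc _ ≤ C * (2 * π * r₂) ^ (-(d : ℝ) / 2) := hbound r₁ r₂ r₃ h₁ h₂ h₃ u v
      _ ≤ _ := by
        rw [mul_assoc C]
        exact mul_le_mul_of_nonneg_left (rpow_two_pi_mul_le_rpow_add h₃ h he) hC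
  · simp_rw [mul_right_comm (gaussDensity d M r₁ _) (gaussDensity d M r₂ _)]
    calc _ ≤ C * (2 * π * r₃) ^ (-(d : ℝ) / 2) := hbound r₁ r₃ r₂ h₁ h₃ h₂ v u
      _ ≤ _ := by
        rw [mul_assoc C, add_comm]
        exact mul_le_mul_of_nonneg_left (rpow_two_pi_mul_le_rpow_add h₂ h he) hC

/-- For every ε > 0 there is a constant c_ε with
`∫_{|z|>ε} p_{r₁}(z) p_{r₂}(u−z) p_{r₃}(v−z) dz ≤ c_ε (r₂+r₃)^{−d/2}` for all
r₁,r₂,r₃ > 0 and all u,v ∈ ℝ^d. -/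
theorem stmt9 (d : ℕ) (hd1 : 1 ≤ d)
    (M : Matrix (Fin d) (Fin d) ℝ) (hMsymm : M.IsSymm) (hMpos : M.PosDef) :
    ∀ ε : ℝ, 0 < ε → ∃ c : ℝ, ∀ r₁ r₂ r₃ : ℝ, 0 < r₁ → 0 < r₂ → 0 < r₃ →
      ∀ u v : Fin d → ℝ,
        (∫ z in {z : Fin d → ℝ | ε < rnorm z},
            gaussDensity d M r₁ z * gaussDensity d M r₂ (u - z) *
              gaussDensity d M r₃ (v - z)) ≤
          c * (r₂ + r₃) ^ (-(d : ℝ) / 2) :=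
  stmt9_general d M hMpos
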